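/- If |M| ≥ 3 and |W| ≥ 3, then there exists a preference profile q̄ ∈ P(M)^W for the women over the men such that no q̄-stable one-side-querying matching rule is OSP-implementable. -/

import Mathlib

/-- A preference list over `α` (a totally ordered subset of `α`), represented as a
duplicate-free list, most-preferred member first. Members of `α` not on the list
are unranked (unacceptable). -/
abbrev PrefList (α : Type) : Type := {l : List α // l.Nodup}

/-- `x ≻ y` according to `p`: `x` is ranked above `y` on `p`, or `x` appears on `p`
while `y` does not. -/
def prefers {α : Type} (p : PrefList α) (x y : α) : Prop :=
  [x, y].Sublist p.val ∨ (x ∈ p.val ∧ y ∉ p.val)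

/-- Strict preference over possible outcomes, where `none` means being unmatched:
being matched to someone on one's list is better than being unmatched, which is
better than being matched to someone not on one's list. -/
def outPrefers {α : Type} (p : PrefList α) : Option α → Option α → Prop
  | some x, some y => prefers p x y
  | some x, none => x ∈ p.val
  | none, some y => y ∉ p.val
  | none, none => False

/-- A preference list is full if it ranks every member of the opposite side. -/
def IsFull {α : Type} (p : PrefList α) : Prop := ∀ x : α, x ∈ p.val

/-- A matching between `M` and `W`: a one-to-one mapping between a subset of `M`
and a subset of `W`, recorded as a partial injective function from men to women
(`μ.toFun m = none` meaning that `m` is unmatched). -/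
structure Matching (M W : Type) where
  toFun : M → Option W
  inj : ∀ ⦃m m' : M⦄ ⦃w : W⦄, toFun m = some w → toFun m' = some w → m = m'

/-- Woman `w` strictly prefers man `m` (according to her list `q`) over the partner
matched to her by `μ` (or over remaining unmatched, if `μ` leaves her unmatched). -/
def womanPrefersOver {M W : Type} (q : PrefList M) (μ : Matching M W) (w : W) (m : M) : Prop :=
  (∃ m', μ.toFun m' = some w ∧ prefers q m m') ∨
    ((∀ m', μ.toFun m' ≠ some w) ∧ m ∈ q.val)

/-- `μ` is stable with respect to men's profile `pbar` and women's profile `qbar`: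
there is no man and woman each preferring the other over their match under `μ`, and
no participant is matched with a partner not on their preference list. -/
def IsStable {M W : Type} (pbar : M → PrefList W) (qbar : W → PrefList M)
    (μ : Matching M W) : Prop :=
  ¬ ((∃ m w, outPrefers (pbar m) (some w) (μ.toFun m) ∧ womanPrefersOver (qbar w) μ w m) ∨
     (∃ m w, μ.toFun m = some w ∧ (w ∉ (pbar m).val ∨ m ∉ (qbar w).val)))

/-- `C` is `qbar`-stable: `C pbar` is stable with respect to `pbar` and `qbar` for
every men's profile `pbar`. -/
def IsStableRule {M W : Type} (qbar : W → PrefList M)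
    (C : (M → PrefList W) → Matching M W) : Prop :=
  ∀ pbar, IsStable pbar qbar (C pbar)

/-- `C` is the `M`-optimal stable matching rule `C^qbar`: it maps each men's profile
`pbar` to a stable matching that every man weakly prefers to every stable matching. -/
def IsMOptimalStableRule {M W : Type} (qbar : W → PrefList M)
    (C : (M → PrefList W) → Matching M W) : Prop :=
  ∀ pbar, IsStable pbar qbar (C pbar) ∧
    ∀ μ, IsStable pbar qbar μ → ∀ m, ¬ outPrefers (pbar m) (μ.toFun m) ((C pbar).toFun m)

/-- `C` is strategy-proof for man `m`. -/
def StrategyProofFor {M W : Type} [DecidableEq M]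
    (C : (M → PrefList W) → Matching M W) (m : M) : Prop :=
  ∀ (pbar : M → PrefList W) (p' : PrefList W),
    ¬ outPrefers (pbar m) ((C (Function.update pbar m p')).toFun m) ((C pbar).toFun m)

/-- A women's profile `qbar` is cyclical if there are men `a`, `b`, `c` and women
`x`, `y` with `a ≻ₓ b ≻ₓ c ≻_y a`. -/
def Cyclical {M W : Type} (qbar : W → PrefList M) : Prop :=
  ∃ (a b c : M) (x y : W),
    prefers (qbar x) a b ∧ prefers (qbar x) b c ∧ prefers (qbar y) c a

/-- A one-side-querying extensive-form matching mechanism for `M` over `W`: a rooted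
tree each of whose leaves is labeled by a matching and each of whose internal nodes
queries a man; the edges out of an internal node querying `q` are the fibers of the
function `next` (two preference lists for `q` lie on the same outgoing edge iff they
are routed to the same subtree). -/
inductive Mech (M W : Type) : Type
  | leaf (μ : Matching M W)
  | node (q : M) (next : PrefList W → Mech M W)

/-- The matching rule implemented by a mechanism: route the profile from the root to
a leaf and output that leaf's matching. -/
def Mech.run {M W : Type} : Mech M W → (M → PrefList W) → Matching M W
  | .leaf μ, _ => μ
  | .node q next, pbar => (next (pbar q)).run pbar

/-- Auxiliary definition of obvious strategy-proofness for man `m`: `P` is the set of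
profiles passing through the current node. At each node querying `m`, for all profiles
`pbar`, `pbar'` passing through the node at which `m`'s lists diverge (are routed to
distinct subtrees), the outcome of `pbar'` is not strictly preferred (according to
`pbar m`) to the outcome of `pbar`. -/
def Mech.OSPAux {M W : Type} (m : M) : Mech M W → Set (M → PrefList W) → Prop
  | .leaf _, _ => True
  | .node q next, P =>
      (q = m → ∀ pbar ∈ P, ∀ pbar' ∈ P, next (pbar m) ≠ next (pbar' m) →
        ¬ outPrefers (pbar m) (((next (pbar' m)).run pbar').toFun m)
            (((next (pbar m)).run pbar).toFun m)) ∧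
      ∀ p : PrefList W, Mech.OSPAux m (next p) {pbar ∈ P | next (pbar q) = next p}

/-- `I` is obviously strategy-proof (OSP) for man `m`. -/
def Mech.OSPFor {M W : Type} (I : Mech M W) (m : M) : Prop :=
  Mech.OSPAux m I Set.univ

/-- A matching rule is OSP-implementable if it is implemented by some mechanism that
is OSP for every man. -/
def OSPImplementable {M W : Type} (C : (M → PrefList W) → Matching M W) : Prop :=
  ∃ I : Mech M W, (∀ m : M, I.OSPFor m) ∧ ∀ pbar, I.run pbar = C pbar

/-- A two-sides-querying extensive-form matching mechanism: internal nodes may query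
either a man (about his preference list over `W`) or a woman (about her preference
list over `M`). -/
inductive Mech2 (M W : Type) : Type
  | leaf (μ : Matching M W)
  | nodeM (q : M) (next : PrefList W → Mech2 M W)
  | nodeW (q : W) (next : PrefList M → Mech2 M W)

/-- The two-sides-querying matching rule implemented by a two-sides-querying mechanism. -/
def Mech2.run {M W : Type} :
    Mech2 M W → (M → PrefList W) → (W → PrefList M) → Matching M W
  | .leaf μ, _, _ => μ
  | .nodeM q next, pbar, qbar => (next (pbar q)).run pbar qbar
  | .nodeW q next, pbar, qbar => (next (qbar q)).run pbar qbar

/-- Auxiliary definition of obvious strategy-proofness of a two-sides-querying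
mechanism for man `m`; `P` is the set of two-sided profiles passing through the
current node. -/
def Mech2.OSPAux {M W : Type} (m : M) :
    Mech2 M W → Set ((M → PrefList W) × (W → PrefList M)) → Prop
  | .leaf _, _ => True
  | .nodeM q next, P =>
      (q = m → ∀ r ∈ P, ∀ r' ∈ P, next (r.1 m) ≠ next (r'.1 m) →
        ¬ outPrefers (r.1 m) (((next (r'.1 m)).run r'.1 r'.2).toFun m)
            (((next (r.1 m)).run r.1 r.2).toFun m)) ∧
      ∀ p : PrefList W, Mech2.OSPAux m (next p) {r ∈ P | next (r.1 q) = next p}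
  | .nodeW q next, P =>
      ∀ p : PrefList M, Mech2.OSPAux m (next p) {r ∈ P | next (r.2 q) = next p}

/-- A two-sides-querying mechanism `I` is obviously strategy-proof (OSP) for man `m`. -/
def Mech2.OSPForM {M W : Type} (I : Mech2 M W) (m : M) : Prop :=
  Mech2.OSPAux m I Set.univ

/-!
Let the women `x`, `y` have the cyclic lists `x : a ≻ b ≻ c` and `y : c ≻ b ≻ a`, and give
each of three men a short and a long list, `a : [y] / [y, x]`, `b : [x] / [y, x]`,
`c : [x] / [x, y]`, all other men listing nobody. On this cube of eight profiles stability
pins down enough outcomes that each of `a`, `b`, `c` has a profile at which switching to his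
other type (while the others also switch) gives him a strictly better match. Follow the cube
down the tree of a mechanism: at the first node splitting it, the queried man is one of
`a`, `b`, `c` and his two types diverge there, so his deviation violates obvious
strategy-proofness; if no node splits it, all eight profiles reach one leaf, which no
deviation survives.
-/

section Preferences

variable {α : Type} {p : PrefList α} {u v : α}

lemma prefers.left_mem (h : prefers p u v) : u ∈ p.val := by
  rcases h with h | h
  · exact h.subset (by simp)
  · exact h.1

lemma prefers_irrefl (p : PrefList α) (u : α) : ¬ prefers p u u := by
  rintro (h | ⟨h, h'⟩)
  · exact absurd (p.2.sublist h) (by simp)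
  · exact h' h

lemma not_outPrefers_self (p : PrefList α) : ∀ o : Option α, ¬ outPrefers p o o
  | none => id
  | some u => prefers_irrefl p u

lemma not_prefers_head {l : List α} (hp : p.val = u :: l) : ¬ prefers p v u := by
  have hu : u ∉ l := (List.nodup_cons.1 (hp ▸ p.2)).1
  rintro (h | ⟨-, h⟩)
  · rw [hp, List.sublist_cons_iff] at h
    rcases h with h | ⟨r, hr, h⟩
    · exact hu (h.subset (by simp))
    · cases hr
      exact hu (List.singleton_sublist.1 h)
  · exact h (hp ▸ List.mem_cons_self)

lemma List.pair_sublist_or_pair_sublist :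
    ∀ {l : List α}, u ∈ l → v ∈ l → u ≠ v → [u, v].Sublist l ∨ [v, u].Sublist l
  | z :: l, hu, hv, huv => by
    rcases List.mem_cons.1 hu with rfl | hul
    · exact Or.inl
        ((List.singleton_sublist.2 ((List.mem_cons.1 hv).resolve_left huv.symm)).cons_cons u)
    rcases List.mem_cons.1 hv with rfl | hvl
    · exact Or.inr ((List.singleton_sublist.2 hul).cons_cons v)
    · exact (List.pair_sublist_or_pair_sublist hul hvl huv).imp (·.cons z) (·.cons z)

lemma prefers_or_prefers (hu : u ∈ p.val) (hv : v ∈ p.val) (huv : u ≠ v) :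
    prefers p u v ∨ prefers p v u :=
  (List.pair_sublist_or_pair_sublist hu hv huv).imp Or.inl Or.inl

lemma eq_of_prefers_of_val_eq_pair {w : α} (hp : p.val = [u, v]) (h : prefers p w v) : w = u := by
  have hw := h.left_mem
  rw [hp, List.mem_pair] at hw
  rcases hw with hw | rfl
  · exact hw
  · exact absurd h (prefers_irrefl p w)

end Preferences

namespace IsStable

variable {M W : Type} {pbar : M → PrefList W} {qbar : W → PrefList M} {μ : Matching M W}
  {m : M} {w : W}

lemma mem_of_toFun_eq_some (h : IsStable pbar qbar μ) (hm : μ.toFun m = some w) :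
    w ∈ (pbar m).val :=
  by_contra fun hw => h (Or.inr ⟨m, w, hm, Or.inl hw⟩)

lemma toFun_eq_some_of_would_block (h : IsStable pbar qbar μ) (hw : w ∈ (pbar m).val)
    (hm : m ∈ (qbar w).val)
    (hman : ∀ w', prefers (pbar m) w' w → ∃ m', m' ≠ m ∧ μ.toFun m' = some w')
    (hwoman : ∀ m', m' ≠ m → μ.toFun m' = some w → prefers (qbar w) m m') :
    μ.toFun m = some w := by
  by_contra hne
  have hman_blocks : outPrefers (pbar m) (some w) (μ.toFun m) := by
    cases hμ : μ.toFun m with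
    | none => exact hw
    | some w' =>
      have hw'w : w' ≠ w := fun e => hne (e ▸ hμ)
      rcases prefers_or_prefers hw (h.mem_of_toFun_eq_some hμ) hw'w.symm with hpref | hpref
      · exact hpref
      · obtain ⟨m', hm'm, hm'⟩ := hman w' hpref
        exact absurd (μ.inj hm' hμ) hm'm
  have hwoman_blocks : womanPrefersOver (qbar w) μ w m := by
    by_cases hfree : ∀ m', μ.toFun m' ≠ some w
    · exact Or.inr ⟨hfree, hm⟩
    · push Not at hfree
      obtain ⟨m', hm'⟩ := hfree
      exact Or.inl ⟨m', hm', hwoman m' (fun e => hne (e ▸ hm')) hm'⟩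
  exact h (Or.inl ⟨m, w, hman_blocks, hwoman_blocks⟩)

variable {a b c : M} {x y : W}

lemma eq_or_eq_or_eq_of_toFun_eq_some (h : IsStable pbar qbar μ)
    (hothers : ∀ m, m ≠ a → m ≠ b → m ≠ c → (pbar m).val = []) (hm : μ.toFun m = some w) :
    m = a ∨ m = b ∨ m = c := by
  by_contra hne
  push Not at hne
  simpa [hothers m hne.1 hne.2.1 hne.2.2] using h.mem_of_toFun_eq_some hm

lemma cyclic_allShort (h : IsStable pbar qbar μ) (hxy : x ≠ y)
    (hqx : (qbar x).val = [a, b, c]) (hpa : (pbar a).val = [y]) (hpb : (pbar b).val = [x])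
    (hothers : ∀ m, m ≠ a → m ≠ b → m ≠ c → (pbar m).val = []) :
    μ.toFun b = some x := by
  refine h.toFun_eq_some_of_would_block (by simp [hpb]) (by simp [hqx])
    (fun w' hw' => absurd hw' (not_prefers_head hpb)) fun m' hm'b hm' => ?_
  have hmem := h.mem_of_toFun_eq_some hm'
  rcases h.eq_or_eq_or_eq_of_toFun_eq_some hothers hm' with rfl | rfl | rfl
  · simp [hpa, hxy] at hmem
  · exact absurd rfl hm'b
  · exact Or.inl (by simp [hqx])

lemma cyclic_cLong (h : IsStable pbar qbar μ) (hac : a ≠ c) (hbc : b ≠ c) (hxy : x ≠ y)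
    (hqx : (qbar x).val = [a, b, c]) (hqy : (qbar y).val = [c, b, a])
    (hpa : (pbar a).val = [y]) (hpb : (pbar b).val = [x]) (hpc : (pbar c).val = [x, y])
    (hothers : ∀ m, m ≠ a → m ≠ b → m ≠ c → (pbar m).val = []) :
    μ.toFun a = none ∧ μ.toFun c = some y := by
  have hb := h.cyclic_allShort hxy hqx hpa hpb hothers
  have hc : μ.toFun c = some y := by
    refine h.toFun_eq_some_of_would_block (by simp [hpc]) (by simp [hqy])
      (fun w' hw' => ⟨b, hbc, eq_of_prefers_of_val_eq_pair hpc hw' ▸ hb⟩) fun m' hm'c hm' => ?_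
    rcases h.eq_or_eq_or_eq_of_toFun_eq_some hothers hm' with rfl | rfl | rfl
    · exact Or.inl (by simp [hqy])
    · simp [hb, hxy] at hm'
    · exact absurd rfl hm'c
  refine ⟨?_, hc⟩
  cases ha : μ.toFun a with
  | none => rfl
  | some w =>
    have hw : w = y := by simpa [hpa] using h.mem_of_toFun_eq_some ha
    exact absurd (μ.inj ha (hw ▸ hc)) hac

lemma cyclic_bLong (h : IsStable pbar qbar μ) (hxy : x ≠ y)
    (hqx : (qbar x).val = [a, b, c]) (hqy : (qbar y).val = [c, b, a])
    (hpa : (pbar a).val = [y]) (hpb : (pbar b).val = [y, x]) (hpc : (pbar c).val = [x])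
    (hothers : ∀ m, m ≠ a → m ≠ b → m ≠ c → (pbar m).val = []) :
    μ.toFun c = some x := by
  have hb : μ.toFun b = some y := by
    refine h.toFun_eq_some_of_would_block (by simp [hpb]) (by simp [hqy])
      (fun w' hw' => absurd hw' (not_prefers_head hpb)) fun m' hm'b hm' => ?_
    have hmem := h.mem_of_toFun_eq_some hm'
    rcases h.eq_or_eq_or_eq_of_toFun_eq_some hothers hm' with rfl | rfl | rfl
    · exact Or.inl (by simp [hqy])
    · exact absurd rfl hm'b
    · simp [hpc, hxy.symm] at hmem
  refine h.toFun_eq_some_of_would_block (by simp [hpc]) (by simp [hqx])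
    (fun w' hw' => absurd hw' (not_prefers_head hpc)) fun m' hm'c hm' => ?_
  have hmem := h.mem_of_toFun_eq_some hm'
  rcases h.eq_or_eq_or_eq_of_toFun_eq_some hothers hm' with rfl | rfl | rfl
  · simp [hpa, hxy] at hmem
  · simp [hb, hxy.symm] at hm'
  · exact absurd rfl hm'c

lemma cyclic_aLong (h : IsStable pbar qbar μ) (hxy : x ≠ y) (hqy : (qbar y).val = [c, b, a])
    (hpa : (pbar a).val = [y, x]) (hpb : (pbar b).val = [x]) (hpc : (pbar c).val = [x])
    (hothers : ∀ m, m ≠ a → m ≠ b → m ≠ c → (pbar m).val = []) :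
    μ.toFun a = some y := by
  refine h.toFun_eq_some_of_would_block (by simp [hpa]) (by simp [hqy])
    (fun w' hw' => absurd hw' (not_prefers_head hpa)) fun m' hm'a hm' => ?_
  have hmem := h.mem_of_toFun_eq_some hm'
  rcases h.eq_or_eq_or_eq_of_toFun_eq_some hothers hm' with rfl | rfl | rfl
  · exact absurd rfl hm'a
  · simp [hpb, hxy.symm] at hmem
  · simp [hpc, hxy.symm] at hmem

lemma cyclic_allLong (h : IsStable pbar qbar μ) (hab : a ≠ b) (hac : a ≠ c) (hbc : b ≠ c)
    (hqx : (qbar x).val = [a, b, c]) (hqy : (qbar y).val = [c, b, a])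
    (hpa : (pbar a).val = [y, x]) (hpb : (pbar b).val = [y, x]) (hpc : (pbar c).val = [x, y])
    (hothers : ∀ m, m ≠ a → m ≠ b → m ≠ c → (pbar m).val = []) :
    μ.toFun b = none := by
  have ha : ∀ m, m ≠ a → μ.toFun m = some y → μ.toFun a = some x := fun m hma hm => by
    refine h.toFun_eq_some_of_would_block (by simp [hpa]) (by simp [hqx])
      (fun w' hw' => ⟨m, hma, eq_of_prefers_of_val_eq_pair hpa hw' ▸ hm⟩) fun m' hm'a hm' => ?_
    rcases h.eq_or_eq_or_eq_of_toFun_eq_some hothers hm' with rfl | rfl | rfl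
    · exact absurd rfl hm'a
    · exact Or.inl (by simp [hqx])
    · exact Or.inl (by simp [hqx])
  have hc : ∀ m, m ≠ c → μ.toFun m = some x → μ.toFun c = some y := fun m hmc hm => by
    refine h.toFun_eq_some_of_would_block (by simp [hpc]) (by simp [hqy])
      (fun w' hw' => ⟨m, hmc, eq_of_prefers_of_val_eq_pair hpc hw' ▸ hm⟩) fun m' hm'c hm' => ?_
    rcases h.eq_or_eq_or_eq_of_toFun_eq_some hothers hm' with rfl | rfl | rfl
    · exact Or.inl (by simp [hqy])
    · exact Or.inl (by simp [hqy])
    · exact absurd rfl hm'c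
  cases hb : μ.toFun b with
  | none => rfl
  | some w =>
    have hw : w = y ∨ w = x := by simpa [hpb] using h.mem_of_toFun_eq_some hb
    rcases hw with rfl | rfl
    · exact absurd (μ.inj hb (hc a hac (ha b hab.symm hb))) hbc
    · exact absurd (μ.inj (ha c hac.symm (hc b hbc hb)) hb) hab

end IsStable

section Cube

variable {M W : Type}

def cubeProfile (f : M → Bool → PrefList W) (t : M → Bool) : M → PrefList W :=
  fun m => f m (t m)

def HasCubeDeviation (C : (M → PrefList W) → Matching M W) (f : M → Bool → PrefList W)
    (m : M) : Prop :=
  ∃ t t' : M → Bool, t m ≠ t' m ∧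
    outPrefers (cubeProfile f t m) ((C (cubeProfile f t')).toFun m) ((C (cubeProfile f t)).toFun m)

lemma Mech.false_of_hasCubeDeviation {C : (M → PrefList W) → Matching M W}
    {f : M → Bool → PrefList W}
    (hdev : ∀ m, f m false ≠ f m true → HasCubeDeviation C f m)
    (hex : ∃ m, HasCubeDeviation C f m) :
    ∀ (I : Mech M W) (P : Set (M → PrefList W)), (∀ t, cubeProfile f t ∈ P) →
      (∀ m, I.OSPAux m P) → (∀ t, I.run (cubeProfile f t) = C (cubeProfile f t)) → False
  | .leaf μ, _, _, _, hrun => by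
    obtain ⟨m, t, t', -, hpref⟩ := hex
    rw [← hrun t, ← hrun t'] at hpref
    exact not_outPrefers_self _ _ hpref
  | .node q next, P, hP, hosp, hrun => by
    by_cases hsplit : next (f q false) = next (f q true)
    · have hroute : ∀ t, next (cubeProfile f t q) = next (f q false) := by
        intro t
        simp only [cubeProfile]
        cases t q
        · rfl
        · exact hsplit.symm
      refine Mech.false_of_hasCubeDeviation hdev hex (next (f q false))
        {pbar ∈ P | next (pbar q) = next (f q false)} (fun t => ⟨hP t, hroute t⟩)
        (fun m => (hosp m).2 _) (fun t => ?_)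
      rw [← hroute t]
      exact hrun t
    · obtain ⟨t, t', hne, hpref⟩ := hdev q (fun e => hsplit (congrArg next e))
      have hdiverge : next (cubeProfile f t q) ≠ next (cubeProfile f t' q) := by
        simp only [cubeProfile]
        revert hne
        cases t q <;> cases t' q <;> intro hne
        exacts [absurd rfl hne, hsplit, Ne.symm hsplit, absurd rfl hne]
      exact (hosp q).1 rfl _ (hP t) _ (hP t') hdiverge ((hrun t).symm ▸ (hrun t').symm ▸ hpref)

theorem not_OSPImplementable_of_hasCubeDeviation {C : (M → PrefList W) → Matching M W}
    {f : M → Bool → PrefList W}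
    (hdev : ∀ m, f m false ≠ f m true → HasCubeDeviation C f m)
    (hex : ∃ m, HasCubeDeviation C f m) : ¬ OSPImplementable C :=
  fun ⟨I, hosp, hrun⟩ =>
    Mech.false_of_hasCubeDeviation hdev hex I Set.univ (fun _ => trivial) hosp (fun _ => hrun _)

end Cube

def PrefList.ofList {α : Type} [DecidableEq α] (l : List α) : PrefList α :=
  ⟨l.dedup, List.nodup_dedup l⟩

lemma PrefList.ofList_val {α : Type} [DecidableEq α] {l : List α} (h : l.Nodup) :
    (PrefList.ofList l).val = l :=
  h.dedup

section CyclicExample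

variable {M W : Type} [DecidableEq M] [DecidableEq W] {a b c : M} {x y : W}

def cyclicWomenProfile (a b c : M) (x y : W) : W → PrefList M := fun w =>
  PrefList.ofList (if w = x then [a, b, c] else if w = y then [c, b, a] else [])

def cyclicMenTypes (a b c : M) (x y : W) : M → Bool → PrefList W := fun m long =>
  PrefList.ofList <|
    if m = a then (if long then [y, x] else [y])
    else if m = b then (if long then [y, x] else [x])
    else if m = c then (if long then [x, y] else [x])
    else []

lemma cyclicWomenProfile_val (hab : a ≠ b) (hac : a ≠ c) (hbc : b ≠ c) (hxy : x ≠ y) :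
    (cyclicWomenProfile a b c x y x).val = [a, b, c] ∧
      (cyclicWomenProfile a b c x y y).val = [c, b, a] := by
  simp only [cyclicWomenProfile, if_pos, if_neg hxy.symm]
  exact ⟨PrefList.ofList_val (by simp [hab, hac, hbc]),
    PrefList.ofList_val (by simp [hab.symm, hac.symm, hbc.symm])⟩

lemma cyclicMenTypes_val (hxy : x ≠ y) (m : M) (long : Bool) :
    (cyclicMenTypes a b c x y m long).val =
      if m = a then (if long then [y, x] else [y])
      else if m = b then (if long then [y, x] else [x])
      else if m = c then (if long then [x, y] else [x])
      else [] :=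
  PrefList.ofList_val (by split_ifs <;> simp [hxy, hxy.symm])

lemma cubeProfile_cyclicMenTypes_val (hab : a ≠ b) (hac : a ≠ c) (hbc : b ≠ c) (hxy : x ≠ y)
    (t : M → Bool) :
    (cubeProfile (cyclicMenTypes a b c x y) t a).val = (if t a then [y, x] else [y]) ∧
      (cubeProfile (cyclicMenTypes a b c x y) t b).val = (if t b then [y, x] else [x]) ∧
      (cubeProfile (cyclicMenTypes a b c x y) t c).val = (if t c then [x, y] else [x]) ∧
      ∀ m, m ≠ a → m ≠ b → m ≠ c → (cubeProfile (cyclicMenTypes a b c x y) t m).val = [] := by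
  simp only [cubeProfile, cyclicMenTypes_val hxy]
  grind

variable {C : (M → PrefList W) → Matching M W}

lemma hasCubeDeviation_cyclic_a (hC : IsStableRule (cyclicWomenProfile a b c x y) C)
    (hab : a ≠ b) (hac : a ≠ c) (hbc : b ≠ c) (hxy : x ≠ y) :
    HasCubeDeviation C (cyclicMenTypes a b c x y) a := by
  obtain ⟨hqx, hqy⟩ := cyclicWomenProfile_val hab hac hbc hxy
  obtain ⟨hpa, hpb, hpc, hothers⟩ := cubeProfile_cyclicMenTypes_val hab hac hbc hxy (· = c)
  obtain ⟨hpa', hpb', hpc', hothers'⟩ := cubeProfile_cyclicMenTypes_val hab hac hbc hxy (· = a)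
  simp only [hac, hbc, hab.symm, hac.symm, decide_true, decide_false, if_true, if_false,
    Bool.false_eq_true] at hpa hpb hpc hpa' hpb' hpc'
  refine ⟨(· = c), (· = a), by simp [hac], ?_⟩
  rw [((hC _).cyclic_cLong hac hbc hxy hqx hqy hpa hpb hpc hothers).1,
    (hC _).cyclic_aLong hxy hqy hpa' hpb' hpc' hothers']
  show y ∈ (cubeProfile _ _ a).val
  simp [hpa]

lemma hasCubeDeviation_cyclic_b (hC : IsStableRule (cyclicWomenProfile a b c x y) C)
    (hab : a ≠ b) (hac : a ≠ c) (hbc : b ≠ c) (hxy : x ≠ y) :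
    HasCubeDeviation C (cyclicMenTypes a b c x y) b := by
  obtain ⟨hqx, hqy⟩ := cyclicWomenProfile_val hab hac hbc hxy
  obtain ⟨hpa, hpb, hpc, hothers⟩ := cubeProfile_cyclicMenTypes_val hab hac hbc hxy fun _ => true
  obtain ⟨hpa', hpb', -, hothers'⟩ := cubeProfile_cyclicMenTypes_val hab hac hbc hxy fun _ => false
  simp only [if_true, if_false, Bool.false_eq_true] at hpa hpb hpc hpa' hpb'
  refine ⟨fun _ => true, fun _ => false, by simp, ?_⟩
  rw [(hC _).cyclic_allLong hab hac hbc hqx hqy hpa hpb hpc hothers,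
    (hC _).cyclic_allShort hxy hqx hpa' hpb' hothers']
  show x ∈ (cubeProfile _ _ b).val
  simp [hpb]

lemma hasCubeDeviation_cyclic_c (hC : IsStableRule (cyclicWomenProfile a b c x y) C)
    (hab : a ≠ b) (hac : a ≠ c) (hbc : b ≠ c) (hxy : x ≠ y) :
    HasCubeDeviation C (cyclicMenTypes a b c x y) c := by
  obtain ⟨hqx, hqy⟩ := cyclicWomenProfile_val hab hac hbc hxy
  obtain ⟨hpa, hpb, hpc, hothers⟩ := cubeProfile_cyclicMenTypes_val hab hac hbc hxy (· = c)
  obtain ⟨hpa', hpb', hpc', hothers'⟩ := cubeProfile_cyclicMenTypes_val hab hac hbc hxy (· = b)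
  simp only [hab, hac, hbc, hbc.symm, decide_true, decide_false, if_true, if_false,
    Bool.false_eq_true] at hpa hpb hpc hpa' hpb' hpc'
  refine ⟨(· = c), (· = b), by simp [hbc.symm], ?_⟩
  rw [((hC _).cyclic_cLong hac hbc hxy hqx hqy hpa hpb hpc hothers).2,
    (hC _).cyclic_bLong hxy hqx hqy hpa' hpb' hpc' hothers']
  show prefers (cubeProfile _ _ c) x y
  exact Or.inl (by simp [hpc])

end CyclicExample

/-- If `|M| ≥ 3` and `|W| ≥ 3`, then there exists a women's preference
profile `qbar` such that no `qbar`-stable matching rule is OSP-implementable. -/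
theorem exists_profile_no_stable_rule_OSPImplementable
    (M W : Type) [Fintype M] [Fintype W]
    (hM : 3 ≤ Fintype.card M) (hW : 3 ≤ Fintype.card W) :
    ∃ qbar : W → PrefList M,
      ∀ C : (M → PrefList W) → Matching M W,
        IsStableRule qbar C → ¬ OSPImplementable C := by
  classical
  obtain ⟨a, b, c, hab, hac, hbc⟩ := Fintype.two_lt_card_iff.1 hM
  obtain ⟨x, y, -, hxy, -, -⟩ := Fintype.two_lt_card_iff.1 hW
  refine ⟨cyclicWomenProfile a b c x y, fun C hC => ?_⟩
  refine not_OSPImplementable_of_hasCubeDeviation (fun m hm => ?_)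
    ⟨a, hasCubeDeviation_cyclic_a hC hab hac hbc hxy⟩
  obtain rfl | ha := eq_or_ne m a
  · exact hasCubeDeviation_cyclic_a hC hab hac hbc hxy
  obtain rfl | hb := eq_or_ne m b
  · exact hasCubeDeviation_cyclic_b hC hab hac hbc hxy
  obtain rfl | hc := eq_or_ne m c
  · exact hasCubeDeviation_cyclic_c hC hab hac hbc hxy
  exact absurd (by simp [cyclicMenTypes, ha, hb, hc]) hm
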